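/- Every admissible set of natural numbers with cardinality 193 has diameter (maximum element minus minimum element) at least 694. -/

import Mathlib

def IsAdmissible (H : Finset ℕ) : Prop :=
  ∀ p : ℕ, p.Prime → (H.image (fun n => n % p)).card < p

/-!
If the diameter were at most `693`, the set would lie in `24` consecutive blocks of `30` integers
starting at its minimum. Admissibility at `2`, `3`, `5` leaves at most `1 * 2 * 4 = 8` residues
mod `30` by the Chinese remainder theorem, and each residue occurs at most once per block, so the
set would have at most `24 * 8 = 192` elements.
-/

namespace Finset

theorem card_le_card_image_mod_mul_of_bounds {H : Finset ℕ} {m q k : ℕ}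
    (hH : ∀ n ∈ H, m ≤ n ∧ n < m + k * q) :
    #H ≤ #(H.image (· % q)) * k := by
  rw [← card_range k, ← card_product]
  refine card_le_card_of_injOn (fun n => (n % q, (n - m) / q)) (fun n hn => ?_) ?_
  · obtain ⟨hmn, hnk⟩ := hH n hn
    simp only [coe_product, coe_image, coe_range, Set.mem_prod, Set.mem_image, mem_coe,
      Set.mem_Iio]
    exact ⟨⟨n, hn, rfl⟩, Nat.div_lt_of_lt_mul (by rw [mul_comm]; omega)⟩
  · intro a ha b hb hab
    obtain ⟨hma, -⟩ := hH a ha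
    obtain ⟨hmb, -⟩ := hH b hb
    obtain ⟨hmod, hdiv⟩ := Prod.mk.inj hab
    have hmod_sub : (a - m) % q = (b - m) % q := by
      refine Nat.ModEq.add_right_cancel' m ?_
      rw [Nat.sub_add_cancel hma, Nat.sub_add_cancel hmb]
      exact hmod
    have hsub : a - m = b - m := by
      rw [← Nat.div_add_mod (a - m) q, ← Nat.div_add_mod (b - m) q, hmod_sub]
      exact congrArg (q * · + _) hdiv
    omega

theorem card_image_mod_mul_le {H : Finset ℕ} {a b : ℕ} (hab : a.Coprime b) :
    #(H.image (· % (a * b))) ≤ #(H.image (· % a)) * #(H.image (· % b)) := by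
  rw [← card_product]
  refine card_le_card_of_injOn (fun r => (r % a, r % b)) ?_ ?_
  · intro r hr
    obtain ⟨n, hn, rfl⟩ := mem_image.1 hr
    simp only [coe_product, coe_image, Set.mem_prod, Set.mem_image, mem_coe,
      Nat.mod_mul_right_mod, Nat.mod_mul_left_mod]
    exact ⟨⟨n, hn, rfl⟩, n, hn, rfl⟩
  · intro r hr s hs h
    obtain ⟨n, -, rfl⟩ := mem_image.1 hr
    obtain ⟨n', -, rfl⟩ := mem_image.1 hs
    obtain ⟨ha, hb⟩ := Prod.mk.inj h
    have := (Nat.modEq_and_modEq_iff_modEq_mul hab).1 ⟨ha, hb⟩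
    simpa [Nat.ModEq] using this

end Finset

open Finset

theorem IsAdmissible.card_image_mod_le {H : Finset ℕ} (hH : IsAdmissible H) {p : ℕ}
    (hp : p.Prime) : #(H.image (· % p)) ≤ p - 1 :=
  Nat.le_sub_one_of_lt (hH p hp)

theorem IsAdmissible.card_image_mod_thirty_le {H : Finset ℕ} (hH : IsAdmissible H) :
    #(H.image (· % 30)) ≤ 8 :=
  calc #(H.image (· % (2 * 3 * 5)))
      _ ≤ #(H.image (· % 2)) * #(H.image (· % 3)) * #(H.image (· % 5)) :=
        (card_image_mod_mul_le (by norm_num)).trans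
          (Nat.mul_le_mul_right _ (card_image_mod_mul_le (by norm_num)))
      _ ≤ 1 * 2 * 4 := by
        gcongr
        exacts [hH.card_image_mod_le Nat.prime_two, hH.card_image_mod_le Nat.prime_three,
          hH.card_image_mod_le Nat.prime_five]

theorem admissible_diameter_lower_bound_193 (H : Finset ℕ) (hne : H.Nonempty)
    (hcard : H.card = 193) (hH : IsAdmissible H) :
    694 ≤ H.max' hne - H.min' hne := by
  by_contra! hdiam
  have hbounds : ∀ n ∈ H, H.min' hne ≤ n ∧ n < H.min' hne + 24 * 30 := fun n hn =>
    ⟨min'_le H n hn, by have := le_max' H n hn; omega⟩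
  have := (card_le_card_image_mod_mul_of_bounds hbounds).trans
    (Nat.mul_le_mul_right 24 hH.card_image_mod_thirty_le)
  omega
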